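/- Let g be a Lie algebra and r ∈ g ∧ g with [r, r] = 0 (classical Yang–Baxter equation, where [,] is the Schouten bracket on Λg). Then δ(X) := ad_X(r) = [X ⊗ 1 + 1 ⊗ X, r] defines a Lie bialgebra structure on g: δ satisfies the co-Jacobi identity and the 1-cocycle condition δ([X,Y]) = ad_X δ(Y) − ad_Y δ(X). -/

import Mathlib

/-!
Write `δ x = ⁅x, r⁆` for the Lie module structure of `g ⊗ g`. Skewness of `δ x` and the cocycle
identity are then the equivariance of the flip and the Lie module axiom on `g ⊗ g`.

For co-Jacobi, `(δ ⊗ 1) δ x = B (⁅x, r⁆ ⊗ r)` where `B (t ⊗ s) = (δₛ ⊗ 1) t` is bilinear. For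
skew `r` and `s` the cyclic sum of `B (r ⊗ s)` equals `-(Y (r ⊗ s) + Y (s ⊗ r))`, where `Y` is the
polarised Yang–Baxter map, `Y (r ⊗ r) = [r₁₂, r₁₃] + [r₁₂, r₂₃] + [r₁₃, r₂₃]`. Since `2 ≠ 0`, skew
tensors are spanned by `u ⊗ v - v ⊗ u`, and there this identity only uses the antisymmetry of the
bracket. As `⁅x, r⁆` is again skew and `Y` is equivariant (this is where Jacobi enters), the
cyclic sum of `(δ ⊗ 1) δ x` is `-⁅x, Y (r ⊗ r)⁆`, which vanishes by the classical Yang–Baxter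
equation.
-/

open TensorProduct

attribute [local instance 100] LieRing.ofAssociativeRing

variable {K g : Type*} [Field K] [CharZero K] [LieRing g] [LieAlgebra K g]

/-- The cyclic permutation `x ⊗ y ⊗ z ↦ y ⊗ z ⊗ x`. -/
noncomputable def cyc3 (K g : Type*) [Field K] [AddCommGroup g] [Module K g] :
    g ⊗[K] (g ⊗[K] g) →ₗ[K] g ⊗[K] (g ⊗[K] g) :=
  (TensorProduct.assoc K g g g).toLinearMap ∘ₗ
    (TensorProduct.comm K g (g ⊗[K] g)).toLinearMap

/-- Co-Jacobi identity `(1 + τ + τ²)(δ ⊗ id)δ = 0`. -/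
noncomputable def CoJacobi3 (δ : g →ₗ[K] g ⊗[K] g) : Prop :=
  ∀ X : g,
    (let J : g →ₗ[K] g ⊗[K] (g ⊗[K] g) :=
      (TensorProduct.assoc K g g g).toLinearMap ∘ₗ
        (TensorProduct.map δ LinearMap.id) ∘ₗ δ;
     J X + cyc3 K g (J X) + cyc3 K g (cyc3 K g (J X))) = 0

/-- The adjoint action of `X` on `g ⊗ g`: `ad_X ⊗ 1 + 1 ⊗ ad_X`, linearly in `X`. -/
noncomputable def adTensorLin (K g : Type*) [Field K] [LieRing g] [LieAlgebra K g] :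
    g →ₗ[K] (g ⊗[K] g →ₗ[K] g ⊗[K] g) :=
  (((TensorProduct.mapBilinear (RingHom.id K) g g g g).flip LinearMap.id) ∘ₗ
      (LieAlgebra.ad K g).toLinearMap)
    + ((TensorProduct.mapBilinear (RingHom.id K) g g g g LinearMap.id) ∘ₗ
      (LieAlgebra.ad K g).toLinearMap)

/-- Drinfeld's triangular cobracket `δ(X) = [X ⊗ 1 + 1 ⊗ X, r] = ad_X(r)`. -/
noncomputable def triangularCobracket (r : g ⊗[K] g) : g →ₗ[K] g ⊗[K] g :=
  (adTensorLin K g).flip r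

open LieModule TensorProduct.LieModule

lemma TensorProduct.comm_lie {R L M N : Type*} [CommRing R] [LieRing L] [LieAlgebra R L]
    [AddCommGroup M] [Module R M] [LieRingModule L M] [LieModule R L M]
    [AddCommGroup N] [Module R N] [LieRingModule L N] [LieModule R L N] (x : L) (t : M ⊗[R] N) :
    TensorProduct.comm R M N ⁅x, t⁆ = ⁅x, TensorProduct.comm R M N t⁆ := by
  induction t using TensorProduct.induction_on with
  | zero => simp
  | tmul m n => simp [add_comm]
  | add s t hs ht => rw [lie_add, map_add, hs, ht, map_add, lie_add]

noncomputable def antisymmetrize (R M : Type*) [CommRing R] [AddCommGroup M] [Module R M] :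
    Module.End R (M ⊗[R] M) :=
  LinearMap.id - (TensorProduct.comm R M M).toLinearMap

lemma antisymmetrize_apply_of_comm_eq_neg {R M : Type*} [CommRing R] [AddCommGroup M]
    [Module R M] {t : M ⊗[R] M} (ht : TensorProduct.comm R M M t = -t) :
    antisymmetrize R M t = (2 : R) • t := by
  rw [antisymmetrize, LinearMap.sub_apply, LinearEquiv.coe_coe, ht, sub_neg_eq_add, two_smul,
    LinearMap.id_apply]

section

variable {F L : Type*} [Field F] [LieRing L] [LieAlgebra F L]

lemma adTensorLin_apply (x : L) (t : L ⊗[F] L) : adTensorLin F L x t = ⁅x, t⁆ := by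
  induction t using TensorProduct.induction_on with
  | zero => simp
  | tmul u v => simp [adTensorLin, mapBilinear_apply]
  | add s t hs ht => rw [map_add, hs, ht, lie_add]

lemma triangularCobracket_apply (r : L ⊗[F] L) (x : L) : triangularCobracket r x = ⁅x, r⁆ :=
  adTensorLin_apply x r

variable (F L)

noncomputable def cyclicSum : L ⊗[F] (L ⊗[F] L) →ₗ[F] L ⊗[F] (L ⊗[F] L) :=
  LinearMap.id + cyc3 F L + cyc3 F L ∘ₗ cyc3 F L

/-- `(r ⊗ s) ↦ [r₁₂, s₁₃] + [r₁₂, s₂₃] + [r₁₃, s₂₃]`, the polarisation of the classical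
Yang–Baxter map. -/
noncomputable def yangBaxterMap : (L ⊗[F] L) ⊗[F] (L ⊗[F] L) →ₗ[F] L ⊗[F] (L ⊗[F] L) :=
  TensorProduct.map (toModuleHom F L L).toLinearMap LinearMap.id ∘ₗ
      (tensorTensorTensorComm F L L L L).toLinearMap
    + TensorProduct.map LinearMap.id
        (TensorProduct.map (toModuleHom F L L).toLinearMap LinearMap.id ∘ₗ
          (TensorProduct.assoc F L L L).symm.toLinearMap) ∘ₗ
      (TensorProduct.assoc F L L (L ⊗[F] L)).toLinearMap
    + TensorProduct.map LinearMap.id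
        (TensorProduct.map LinearMap.id (toModuleHom F L L).toLinearMap) ∘ₗ
      (TensorProduct.assoc F L L (L ⊗[F] L)).toLinearMap ∘ₗ
      (tensorTensorTensorComm F L L L L).toLinearMap

noncomputable def cobracketSquare : (L ⊗[F] L) ⊗[F] (L ⊗[F] L) →ₗ[F] L ⊗[F] (L ⊗[F] L) :=
  (TensorProduct.assoc F L L L).toLinearMap ∘ₗ
    TensorProduct.map (toModuleHom F L (L ⊗[F] L)).toLinearMap LinearMap.id ∘ₗ
    (rightComm F L L (L ⊗[F] L)).toLinearMap

variable {F L}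

@[simp]
lemma yangBaxterMap_tmul (a b c d : L) :
    yangBaxterMap F L ((a ⊗ₜ b) ⊗ₜ (c ⊗ₜ d)) =
      ⁅a, c⁆ ⊗ₜ (b ⊗ₜ d) + a ⊗ₜ (⁅b, c⁆ ⊗ₜ d) + a ⊗ₜ (c ⊗ₜ ⁅b, d⁆) := by
  simp [yangBaxterMap]

lemma yangBaxterMap_sum_tmul_sum {ι : Type*} [Fintype ι] (a b : ι → L) :
    yangBaxterMap F L ((∑ i, a i ⊗ₜ[F] b i) ⊗ₜ (∑ i, a i ⊗ₜ[F] b i)) =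
      ∑ i, ∑ j, (⁅a i, a j⁆ ⊗ₜ[F] (b i ⊗ₜ[F] b j) + a i ⊗ₜ[F] (⁅b i, a j⁆ ⊗ₜ[F] b j)
        + a i ⊗ₜ[F] (a j ⊗ₜ[F] ⁅b i, b j⁆)) := by
  simp only [sum_tmul, tmul_sum, map_sum, yangBaxterMap_tmul]
  exact Finset.sum_comm

lemma yangBaxterMap_lie (x : L) (w : (L ⊗[F] L) ⊗[F] (L ⊗[F] L)) :
    yangBaxterMap F L ⁅x, w⁆ = ⁅x, yangBaxterMap F L w⁆ := by
  have h : yangBaxterMap F L ∘ₗ toEnd F L _ x = toEnd F L _ x ∘ₗ yangBaxterMap F L := by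
    refine ext_fourfold' fun a b c d => ?_
    simp only [LinearMap.comp_apply, toEnd_apply_apply, lie_tmul_right, map_add,
      yangBaxterMap_tmul, leibniz_lie x a, leibniz_lie x b, add_tmul, tmul_add]
    abel
  exact LinearMap.congr_fun h w

@[simp]
lemma cobracketSquare_tmul (a b : L) (s : L ⊗[F] L) :
    cobracketSquare F L ((a ⊗ₜ b) ⊗ₜ s) = TensorProduct.assoc F L L L (⁅a, s⁆ ⊗ₜ b) := by
  simp [cobracketSquare]

lemma cobracketSquare_tmul_eq (t s : L ⊗[F] L) :
    cobracketSquare F L (t ⊗ₜ s) =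
      TensorProduct.assoc F L L L (TensorProduct.map (triangularCobracket s) LinearMap.id t) := by
  induction t using TensorProduct.induction_on with
  | zero => simp
  | tmul a b => simp [triangularCobracket_apply]
  | add t t' ht ht' => rw [add_tmul, map_add, ht, ht', map_add, map_add]

lemma cyclicSum_cobracketSquare_comp_map_antisymmetrize :
    cyclicSum F L ∘ₗ cobracketSquare F L ∘ₗ
        TensorProduct.map (antisymmetrize F L) (antisymmetrize F L) =
      -(yangBaxterMap F L + yangBaxterMap F L ∘ₗ (TensorProduct.comm F _ _).toLinearMap) ∘ₗ
        TensorProduct.map (antisymmetrize F L) (antisymmetrize F L) := by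
  refine ext_fourfold' fun a b c d => ?_
  simp only [antisymmetrize, LinearMap.comp_apply, TensorProduct.map_tmul, LinearMap.sub_apply,
    LinearMap.id_apply, LinearEquiv.coe_coe, comm_tmul, sub_tmul, tmul_sub, map_sub,
    cobracketSquare_tmul, lie_tmul_right, add_tmul, map_add, assoc_tmul, cyclicSum,
    LinearMap.add_apply, cyc3, yangBaxterMap_tmul, LinearMap.neg_apply]
  simp only [← lie_skew c a, ← lie_skew d a, ← lie_skew c b, ← lie_skew d b, neg_tmul, tmul_neg]
  abel

lemma cyclicSum_cobracketSquare_of_comm_eq_neg [NeZero (2 : F)] {r s : L ⊗[F] L}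
    (hr : TensorProduct.comm F L L r = -r) (hs : TensorProduct.comm F L L s = -s) :
    cyclicSum F L (cobracketSquare F L (r ⊗ₜ s)) =
      -(yangBaxterMap F L (r ⊗ₜ s) + yangBaxterMap F L (s ⊗ₜ r)) := by
  have h := LinearMap.congr_fun cyclicSum_cobracketSquare_comp_map_antisymmetrize (r ⊗ₜ s)
  simp only [LinearMap.comp_apply, TensorProduct.map_tmul, antisymmetrize_apply_of_comm_eq_neg hr,
    antisymmetrize_apply_of_comm_eq_neg hs, smul_tmul_smul, map_smul, LinearMap.neg_apply,
    LinearMap.add_apply, LinearEquiv.coe_coe, comm_tmul, ← smul_neg] at h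
  exact smul_right_injective _ (mul_ne_zero two_ne_zero two_ne_zero : (2 * 2 : F) ≠ 0) h

lemma cyclicSum_cobracketSquare_lie_tmul_of_comm_eq_neg [NeZero (2 : F)] {r : L ⊗[F] L}
    (hr : TensorProduct.comm F L L r = -r) (x : L) :
    cyclicSum F L (cobracketSquare F L (⁅x, r⁆ ⊗ₜ r)) = -⁅x, yangBaxterMap F L (r ⊗ₜ r)⁆ := by
  have hxr : TensorProduct.comm F L L ⁅x, r⁆ = -⁅x, r⁆ := by
    rw [TensorProduct.comm_lie, hr, lie_neg]
  rw [cyclicSum_cobracketSquare_of_comm_eq_neg hxr hr, ← yangBaxterMap_lie, lie_tmul_right,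
    map_add]

lemma coJacobi3_triangularCobracket [NeZero (2 : F)] {r : L ⊗[F] L}
    (hr : TensorProduct.comm F L L r = -r) (hYB : yangBaxterMap F L (r ⊗ₜ r) = 0) :
    CoJacobi3 (triangularCobracket r) := by
  intro x
  have h := cyclicSum_cobracketSquare_lie_tmul_of_comm_eq_neg hr x
  rw [hYB, lie_zero, neg_zero, ← triangularCobracket_apply, cobracketSquare_tmul_eq] at h
  simpa [cyclicSum] using h

end

theorem triangular_lie_bialgebra_general
    (n : ℕ) (a b : Fin n → g) (r : g ⊗[K] g)
    (hr : r = ∑ i, a i ⊗ₜ[K] b i)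
    (hskew : TensorProduct.comm K g g r = - r)
    (hCYBE : ∑ i, ∑ j,
        ((⁅a i, a j⁆ ⊗ₜ[K] (b i ⊗ₜ[K] b j))
          + (a i ⊗ₜ[K] (⁅b i, a j⁆ ⊗ₜ[K] b j))
          + (a i ⊗ₜ[K] (a j ⊗ₜ[K] ⁅b i, b j⁆))) = 0) :
    (∀ X : g, TensorProduct.comm K g g (triangularCobracket r X)
        = - triangularCobracket r X) ∧
    CoJacobi3 (triangularCobracket r) ∧
    (∀ X Y : g, triangularCobracket r ⁅X, Y⁆
        = adTensorLin K g X (triangularCobracket r Y)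
          - adTensorLin K g Y (triangularCobracket r X)) := by
  have hYB : yangBaxterMap K g (r ⊗ₜ r) = 0 := by
    rw [hr, yangBaxterMap_sum_tmul_sum]
    exact hCYBE
  refine ⟨fun X => ?_, coJacobi3_triangularCobracket hskew hYB, fun X Y => ?_⟩
  · rw [triangularCobracket_apply, TensorProduct.comm_lie, hskew, lie_neg]
  · simp only [triangularCobracket_apply, adTensorLin_apply, lie_lie]

/-- Drinfeld's triangular Lie bialgebras: if `r ∈ Λ²g ⊂ g ⊗ g`
(antisymmetric, `r = Σ aᵢ ⊗ bᵢ`) satisfies the classical Yang-Baxter equation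
`[r,r] = 0` (algebraic Schouten bracket), then `δ(X) := ad_X(r)` is a Lie bialgebra
cobracket on `g`: it lands in `Λ²g`, satisfies the co-Jacobi identity and the
1-cocycle condition `δ([X,Y]) = ad_X δ(Y) − ad_Y δ(X)`. -/
theorem triangular_lie_bialgebra [FiniteDimensional K g]
    (n : ℕ) (a b : Fin n → g) (r : g ⊗[K] g)
    (hr : r = ∑ i, a i ⊗ₜ[K] b i)
    (hskew : TensorProduct.comm K g g r = - r)
    (hCYBE : ∑ i, ∑ j,
        ((⁅a i, a j⁆ ⊗ₜ[K] (b i ⊗ₜ[K] b j))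
          + (a i ⊗ₜ[K] (⁅b i, a j⁆ ⊗ₜ[K] b j))
          + (a i ⊗ₜ[K] (a j ⊗ₜ[K] ⁅b i, b j⁆))) = 0) :
    (∀ X : g, TensorProduct.comm K g g (triangularCobracket r X)
        = - triangularCobracket r X) ∧
    CoJacobi3 (triangularCobracket r) ∧
    (∀ X Y : g, triangularCobracket r ⁅X, Y⁆
        = adTensorLin K g X (triangularCobracket r Y)
          - adTensorLin K g Y (triangularCobracket r X)) :=
  triangular_lie_bialgebra_general n a b r hr hskew hCYBE
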